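/- arXiv:2208.08019 — 6 statements merged into one kernel-verified Lean document; each statement's English description precedes it below -/
import Mathlib

section
/- Let α be a nonempty finite type and let p, q : α → ℝ be strictly positive functions each summing to 1 over α (discrete probability distributions). For every function d : α → ℝ with 0 < d x < 1 for all x, define f(d) = ∑_{x} p x · log(d x) + ∑_{x} q x · log(1 − d x). Then f(d) ≤ f(d*) where d* x = p x / (p x + q x). That is, the discriminator d* maximizes the GAN discriminator objective for fixed distributions p (data) and q (generator). -/
open Finset

lemma gan_pointwise (a b t : ℝ) (ha : 0 < a) (hb : 0 < b) (ht0 : 0 < t) (ht1 : t < 1) :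
    a * Real.log t + b * Real.log (1 - t)
      ≤ a * Real.log (a / (a + b)) + b * Real.log (1 - a / (a + b)) := by
  have hab : 0 < a + b := by linarith
  have h1t : 0 < 1 - t := by linarith
  have h2 : 1 - a / (a + b) = b / (a + b) := by field_simp; ring
  rw [h2]
  have hA : Real.log (t * (a + b) / a) ≤ t * (a + b) / a - 1 :=
    Real.log_le_sub_one_of_pos (by positivity)
  have hB : Real.log ((1 - t) * (a + b) / b) ≤ (1 - t) * (a + b) / b - 1 :=
    Real.log_le_sub_one_of_pos (by positivity)
  have hA' : Real.log (t * (a + b) / a) = Real.log t - Real.log (a / (a + b)) := by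
    rw [Real.log_div (by positivity) ha.ne', Real.log_mul ht0.ne' hab.ne',
      Real.log_div ha.ne' hab.ne']
    ring
  have hB' : Real.log ((1 - t) * (a + b) / b) = Real.log (1 - t) - Real.log (b / (a + b)) := by
    rw [Real.log_div (by positivity) hb.ne', Real.log_mul h1t.ne' hab.ne',
      Real.log_div hb.ne' hab.ne']
    ring
  rw [hA'] at hA
  rw [hB'] at hB
  have hA2 : a * (Real.log t - Real.log (a / (a + b))) ≤ t * (a + b) - a := by
    have := mul_le_mul_of_nonneg_left hA ha.le
    calc a * (Real.log t - Real.log (a / (a + b))) ≤ a * (t * (a + b) / a - 1) := this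
      _ = t * (a + b) - a := by field_simp
  have hB2 : b * (Real.log (1 - t) - Real.log (b / (a + b))) ≤ (1 - t) * (a + b) - b := by
    have := mul_le_mul_of_nonneg_left hB hb.le
    calc b * (Real.log (1 - t) - Real.log (b / (a + b))) ≤ b * ((1 - t) * (a + b) / b - 1) := this
      _ = (1 - t) * (a + b) - b := by field_simp
  nlinarith [hA2, hB2]

/-- The discriminator `d* x = p x / (p x + q x)` maximizes the discrete GAN
discriminator objective for fixed distributions `p` (data) and `q` (generator). -/
theorem gan_optimal_discriminator {α : Type*} [Fintype α] [Nonempty α]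
    (p q : α → ℝ) (hp : ∀ x, 0 < p x) (hq : ∀ x, 0 < q x)
    (hps : ∑ x, p x = 1) (hqs : ∑ x, q x = 1)
    (d : α → ℝ) (hd : ∀ x, 0 < d x ∧ d x < 1) :
    ∑ x, p x * Real.log (d x) + ∑ x, q x * Real.log (1 - d x)
      ≤ ∑ x, p x * Real.log (p x / (p x + q x))
        + ∑ x, q x * Real.log (1 - p x / (p x + q x)) := by
  rw [← Finset.sum_add_distrib, ← Finset.sum_add_distrib]
  exact Finset.sum_le_sum fun x _ =>
    gan_pointwise (p x) (q x) (d x) (hp x) (hq x) (hd x).1 (hd x).2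
end

section
/- Let α be a nonempty finite type and let p, q : α → ℝ be strictly positive functions each summing to 1 over α (discrete probability distributions). Then the supremum, over all functions d : α → ℝ with 0 < d x < 1 for all x, of f(d) = ∑_{x} p x · log(d x) + ∑_{x} q x · log(1 − d x), equals ∑_{x} p x · log(p x / (p x + q x)) + ∑_{x} q x · log(q x / (p x + q x)), and this supremum is attained (at d x = p x / (p x + q x)). -/
open Finset

lemma pointwise_max (a b t : ℝ) (ha : 0 < a) (hb : 0 < b) (ht0 : 0 < t) (ht1 : t < 1) :
    a * Real.log t + b * Real.log (1 - t)
      ≤ a * Real.log (a / (a + b)) + b * Real.log (b / (a + b)) := by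
  have hab : 0 < a + b := by linarith
  have h1t : 0 < 1 - t := by linarith
  -- log x ≤ x - 1
  have key1 : Real.log t - Real.log (a / (a + b)) ≤ t * (a + b) / a - 1 := by
    have : Real.log t - Real.log (a / (a + b)) = Real.log (t * (a + b) / a) := by
      rw [Real.log_div (by positivity) (ne_of_gt ha), Real.log_mul (ne_of_gt ht0) (ne_of_gt hab),
        Real.log_div (ne_of_gt ha) (ne_of_gt hab)]
      ring
    rw [this]
    exact Real.log_le_sub_one_of_pos (by positivity)
  have key2 : Real.log (1 - t) - Real.log (b / (a + b)) ≤ (1 - t) * (a + b) / b - 1 := by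
    have : Real.log (1 - t) - Real.log (b / (a + b)) = Real.log ((1 - t) * (a + b) / b) := by
      rw [Real.log_div (by positivity) (ne_of_gt hb), Real.log_mul (ne_of_gt h1t) (ne_of_gt hab),
        Real.log_div (ne_of_gt hb) (ne_of_gt hab)]
      ring
    rw [this]
    exact Real.log_le_sub_one_of_pos (by positivity)
  have h1 : a * (Real.log t - Real.log (a / (a + b))) ≤ t * (a + b) - a := by
    calc a * (Real.log t - Real.log (a / (a + b))) ≤ a * (t * (a + b) / a - 1) := by
          exact mul_le_mul_of_nonneg_left key1 ha.le
      _ = t * (a + b) - a := by field_simp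
  have h2 : b * (Real.log (1 - t) - Real.log (b / (a + b))) ≤ (1 - t) * (a + b) - b := by
    calc b * (Real.log (1 - t) - Real.log (b / (a + b))) ≤ b * ((1 - t) * (a + b) / b - 1) := by
          exact mul_le_mul_of_nonneg_left key2 hb.le
      _ = (1 - t) * (a + b) - b := by field_simp
  nlinarith [h1, h2]

/-- The supremum of the discrete GAN discriminator objective over discriminators
`d : α → (0,1)` equals `∑ p log (p/(p+q)) + ∑ q log (q/(p+q))`, and it is attained. -/
theorem gan_sup_discriminator_value {α : Type*} [Fintype α] [Nonempty α]
    (p q : α → ℝ) (hp : ∀ x, 0 < p x) (hq : ∀ x, 0 < q x)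
    (hps : ∑ x, p x = 1) (hqs : ∑ x, q x = 1) :
    IsGreatest
      {v : ℝ | ∃ d : α → ℝ, (∀ x, 0 < d x ∧ d x < 1) ∧
        v = ∑ x, p x * Real.log (d x) + ∑ x, q x * Real.log (1 - d x)}
      (∑ x, p x * Real.log (p x / (p x + q x))
        + ∑ x, q x * Real.log (q x / (p x + q x))) := by
  constructor
  · refine ⟨fun x => p x / (p x + q x), fun x => ?_, ?_⟩
    · have hab : 0 < p x + q x := by have := hp x; have := hq x; linarith
      constructor
      · exact div_pos (hp x) hab
      · rw [div_lt_one hab]; linarith [hq x]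
    · congr 1
      apply Finset.sum_congr rfl
      intro x _
      have hab : 0 < p x + q x := by have := hp x; have := hq x; linarith
      congr 2
      field_simp
      ring
  · rintro v ⟨d, hd, rfl⟩
    rw [← Finset.sum_add_distrib, ← Finset.sum_add_distrib]
    apply Finset.sum_le_sum
    intro x _
    exact pointwise_max (p x) (q x) (d x) (hp x) (hq x) (hd x).1 (hd x).2
end

section
/- Let α be a nonempty finite type and let p, q : α → ℝ be strictly positive functions each summing to 1 over α (discrete probability distributions), and let m x = (p x + q x)/2 be their midpoint distribution. Then ∑_{x} p x · log(p x / (p x + q x)) + ∑_{x} q x · log(q x / (p x + q x)) = −log 4 + ∑_{x} p x · log(p x / m x) + ∑_{x} q x · log(q x / m x). That is, the optimal-discriminator GAN value decomposes as −log 4 plus the sum of the Kullback–Leibler divergences of p and q from their midpoint. -/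
open Finset

/-- The optimal-discriminator GAN value decomposes as `-log 4` plus the sum of the
KL divergences of `p` and `q` from their midpoint `m = (p + q)/2`. -/
theorem gan_value_eq_neg_log_four_add_jsd {α : Type*} [Fintype α] [Nonempty α]
    (p q : α → ℝ) (hp : ∀ x, 0 < p x) (hq : ∀ x, 0 < q x)
    (hps : ∑ x, p x = 1) (hqs : ∑ x, q x = 1) :
    ∑ x, p x * Real.log (p x / (p x + q x))
      + ∑ x, q x * Real.log (q x / (p x + q x))
    = -Real.log 4
      + (∑ x, p x * Real.log (p x / ((p x + q x) / 2))
        + ∑ x, q x * Real.log (q x / ((p x + q x) / 2))) := by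
  have key : ∀ (f : α → ℝ), (∀ x, 0 < f x) →
      ∀ x : α, f x * Real.log (f x / ((p x + q x) / 2))
        = f x * Real.log (f x / (p x + q x)) + f x * Real.log 2 := by
    intro f hf x
    have hpq : p x + q x ≠ 0 := ne_of_gt (add_pos (hp x) (hq x))
    have : f x / ((p x + q x) / 2) = (f x / (p x + q x)) * 2 := by
      field_simp
    rw [this, Real.log_mul (ne_of_gt (div_pos (hf x) (add_pos (hp x) (hq x)))) two_ne_zero, mul_add]
  have h1 : ∑ x, p x * Real.log (p x / ((p x + q x) / 2))
      = ∑ x, p x * Real.log (p x / (p x + q x)) + Real.log 2 := by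
    rw [Finset.sum_congr rfl (fun x _ => key p hp x), Finset.sum_add_distrib,
      ← Finset.sum_mul, hps, one_mul]
  have h2 : ∑ x, q x * Real.log (q x / ((p x + q x) / 2))
      = ∑ x, q x * Real.log (q x / (p x + q x)) + Real.log 2 := by
    rw [Finset.sum_congr rfl (fun x _ => key q hq x), Finset.sum_add_distrib,
      ← Finset.sum_mul, hqs, one_mul]
  have h4 : Real.log 4 = 2 * Real.log 2 := by
    rw [show (4:ℝ) = 2^2 by norm_num, Real.log_pow]; push_cast; ring
  rw [h1, h2, h4]; ring
end

section
/- Let α be a nonempty finite type and let p, q : α → ℝ be strictly positive functions each summing to 1 over α (discrete probability distributions). Then ∑_{x} p x · log(p x / (p x + q x)) + ∑_{x} q x · log(q x / (p x + q x)) ≥ −log 4, and equality holds if and only if p = q. -/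
open Finset

lemma kl_term_ge {p m : ℝ} (hp : 0 < p) (hm : 0 < m) :
    p - m ≤ p * Real.log (p / m) := by
  have h := Real.log_le_sub_one_of_pos (show 0 < m / p by positivity)
  have hlog : Real.log (m / p) = - Real.log (p / m) := by
    rw [← Real.log_inv]; congr 1; rw [inv_div]
  rw [hlog] at h
  have h2 := mul_le_mul_of_nonneg_left h hp.le
  have h3 : p * (m / p) = m := by field_simp
  nlinarith

lemma kl_term_gt {p m : ℝ} (hp : 0 < p) (hm : 0 < m) (hne : p ≠ m) :
    p - m < p * Real.log (p / m) := by
  have hne' : m / p ≠ 1 := by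
    intro h; apply hne; field_simp at h; linarith
  have h := Real.log_lt_sub_one_of_pos (show 0 < m / p by positivity) hne'
  have hlog : Real.log (m / p) = - Real.log (p / m) := by
    rw [← Real.log_inv]; congr 1; rw [inv_div]
  rw [hlog] at h
  have h2 := (mul_lt_mul_iff_right₀ hp).mpr h
  have h3 : p * (m / p) = m := by field_simp
  nlinarith

/-- The optimal-discriminator GAN value is at least `-log 4`, with equality iff
the generator distribution `q` equals the data distribution `p`. -/
theorem gan_value_ge_neg_log_four {α : Type*} [Fintype α] [Nonempty α]
    (p q : α → ℝ) (hp : ∀ x, 0 < p x) (hq : ∀ x, 0 < q x)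
    (hps : ∑ x, p x = 1) (hqs : ∑ x, q x = 1) :
    -Real.log 4 ≤ ∑ x, p x * Real.log (p x / (p x + q x))
        + ∑ x, q x * Real.log (q x / (p x + q x)) ∧
    (∑ x, p x * Real.log (p x / (p x + q x))
        + ∑ x, q x * Real.log (q x / (p x + q x)) = -Real.log 4 ↔ p = q) := by
  set m : α → ℝ := fun x => (p x + q x) / 2 with hm
  have hmpos : ∀ x, 0 < m x := fun x => by
    have := hp x; have := hq x; simp only [hm]; positivity
  have hms : ∑ x, m x = 1 := by
    simp only [hm]
    rw [← Finset.sum_div, Finset.sum_add_distrib, hps, hqs]; norm_num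
  have hkey : ∀ (f : α → ℝ), (∀ x, 0 < f x) →
      ∀ x, f x * Real.log (f x / (p x + q x))
        = f x * Real.log (f x / m x) - f x * Real.log 2 := by
    intro f hf x
    have hpq : p x + q x = 2 * m x := by simp only [hm]; ring
    have hdiv : f x / (p x + q x) = (f x / m x) / 2 := by
      rw [hpq]; field_simp
    rw [hdiv, Real.log_div (div_pos (hf x) (hmpos x)).ne' two_ne_zero]
    ring
  have hA : ∑ x, p x * Real.log (p x / (p x + q x))
      = (∑ x, p x * Real.log (p x / m x)) - Real.log 2 := by
    calc ∑ x, p x * Real.log (p x / (p x + q x))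
        = ∑ x, (p x * Real.log (p x / m x) - p x * Real.log 2) :=
          Finset.sum_congr rfl fun x _ => hkey p hp x
      _ = (∑ x, p x * Real.log (p x / m x)) - (∑ x, p x) * Real.log 2 := by
          rw [Finset.sum_sub_distrib, ← Finset.sum_mul]
      _ = (∑ x, p x * Real.log (p x / m x)) - Real.log 2 := by rw [hps, one_mul]
  have hB : ∑ x, q x * Real.log (q x / (p x + q x))
      = (∑ x, q x * Real.log (q x / m x)) - Real.log 2 := by
    calc ∑ x, q x * Real.log (q x / (p x + q x))
        = ∑ x, (q x * Real.log (q x / m x) - q x * Real.log 2) :=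
          Finset.sum_congr rfl fun x _ => hkey q hq x
      _ = (∑ x, q x * Real.log (q x / m x)) - (∑ x, q x) * Real.log 2 := by
          rw [Finset.sum_sub_distrib, ← Finset.sum_mul]
      _ = (∑ x, q x * Real.log (q x / m x)) - Real.log 2 := by rw [hqs, one_mul]
  have hlog4 : Real.log 4 = 2 * Real.log 2 := by
    rw [show (4:ℝ) = 2^2 by norm_num, Real.log_pow]; push_cast; ring
  have hAnn : 0 ≤ ∑ x, p x * Real.log (p x / m x) := by
    have : ∑ x, (p x - m x) ≤ ∑ x, p x * Real.log (p x / m x) :=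
      Finset.sum_le_sum fun x _ => kl_term_ge (hp x) (hmpos x)
    rwa [Finset.sum_sub_distrib, hps, hms, sub_self] at this
  have hBnn : 0 ≤ ∑ x, q x * Real.log (q x / m x) := by
    have : ∑ x, (q x - m x) ≤ ∑ x, q x * Real.log (q x / m x) :=
      Finset.sum_le_sum fun x _ => kl_term_ge (hq x) (hmpos x)
    rwa [Finset.sum_sub_distrib, hqs, hms, sub_self] at this
  constructor
  · rw [hA, hB, hlog4]; linarith
  · constructor
    · intro h
      by_contra hne
      obtain ⟨x0, hx0⟩ : ∃ x, p x ≠ q x := by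
        by_contra hc; push_neg at hc; exact hne (funext hc)
      have hpm : p x0 ≠ m x0 := by
        simp only [hm]; intro hcon; apply hx0; linarith
      have hApos : 0 < ∑ x, p x * Real.log (p x / m x) := by
        have hlt : ∑ x, (p x - m x) < ∑ x, p x * Real.log (p x / m x) := by
          apply Finset.sum_lt_sum (fun x _ => kl_term_ge (hp x) (hmpos x))
          exact ⟨x0, Finset.mem_univ x0, kl_term_gt (hp x0) (hmpos x0) hpm⟩
        rwa [Finset.sum_sub_distrib, hps, hms, sub_self] at hlt
      rw [hA, hB, hlog4] at h
      linarith
    · intro h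
      subst h
      have hmp : ∀ x, p x / m x = 1 := fun x => by
        simp only [hm]
        rw [show (p x + p x) / 2 = p x by ring, div_self (hp x).ne']
      rw [hA]
      simp only [hmp, Real.log_one, mul_zero, Finset.sum_const_zero]
      rw [hlog4]; ring
end

section
/- Let α be a nonempty finite type and let p : α → ℝ be a strictly positive function summing to 1 over α (a discrete probability distribution). Then the supremum, over all functions d : α → ℝ with 0 < d x < 1 for all x, of ∑_{x} p x · log(d x) + ∑_{x} p x · log(1 − d x), equals −log 4, and it is attained at the constant discriminator d x = 1/2. -/
open Finset

lemma half_val {α : Type*} [Fintype α] (p : α → ℝ) (hps : ∑ x, p x = 1) :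
    ∑ x, p x * Real.log ((1 : ℝ) / 2) + ∑ x, p x * Real.log (1 - (1 : ℝ) / 2)
      = -Real.log 4 := by
  have h4 : Real.log 4 = 2 * Real.log 2 := by
    rw [show (4:ℝ) = 2^2 by norm_num, Real.log_pow]; push_cast; ring
  have h : Real.log ((1:ℝ)/2) = -Real.log 2 := by
    rw [Real.log_div one_ne_zero (by norm_num), Real.log_one]; ring
  have : (1 : ℝ) - 1/2 = 1/2 := by norm_num
  rw [this, ← Finset.sum_mul, hps, h, h4]; ring

/-- When the generator distribution equals the data distribution `p`, the supremum
of the GAN objective over discriminators `d : α → (0,1)` equals `-log 4`, and it is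
attained at the constant discriminator `d x = 1/2`. -/
theorem gan_sup_eq_neg_log_four_of_eq {α : Type*} [Fintype α] [Nonempty α]
    (p : α → ℝ) (hp : ∀ x, 0 < p x) (hps : ∑ x, p x = 1) :
    IsGreatest
      {v : ℝ | ∃ d : α → ℝ, (∀ x, 0 < d x ∧ d x < 1) ∧
        v = ∑ x, p x * Real.log (d x) + ∑ x, p x * Real.log (1 - d x)}
      (-Real.log 4) ∧
    ∑ x, p x * Real.log ((1 : ℝ) / 2) + ∑ x, p x * Real.log (1 - (1 : ℝ) / 2)
      = -Real.log 4 := by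
  refine ⟨⟨⟨fun _ => 1/2, fun x => by norm_num, (half_val p hps).symm⟩, ?_⟩,
    half_val p hps⟩
  rintro v ⟨d, hd, rfl⟩
  have key : ∀ x, p x * Real.log (d x) + p x * Real.log (1 - d x)
      ≤ p x * (-Real.log 4) := by
    intro x
    obtain ⟨h0, h1⟩ := hd x
    have h1' : 0 < 1 - d x := by linarith
    have hlog : Real.log (d x) + Real.log (1 - d x) ≤ -Real.log 4 := by
      rw [← Real.log_mul (ne_of_gt h0) (ne_of_gt h1'),
        show -Real.log 4 = Real.log (1/4) by
          rw [Real.log_div one_ne_zero (by norm_num), Real.log_one]; ring]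
      apply Real.log_le_log (by positivity)
      nlinarith [sq_nonneg (d x - 1/2)]
    nlinarith [(hp x).le, hlog]
  calc ∑ x, p x * Real.log (d x) + ∑ x, p x * Real.log (1 - d x)
      = ∑ x, (p x * Real.log (d x) + p x * Real.log (1 - d x)) := by
        rw [Finset.sum_add_distrib]
    _ ≤ ∑ x, p x * (-Real.log 4) := Finset.sum_le_sum fun x _ => key x
    _ = -Real.log 4 := by rw [← Finset.sum_mul, hps, one_mul]
end

section
/- Let α be a nonempty finite type and let p : α → ℝ be a strictly positive function summing to 1 over α (the data distribution). For each strictly positive q : α → ℝ summing to 1 (a candidate generator distribution), let V(q) denote the supremum over all discriminators d : α → ℝ with 0 < d x < 1 of ∑_{x} p x · log(d x) + ∑_{x} q x · log(1 − d x). Then V(q) ≥ −log 4 for every such q, and V(q) = −log 4 if and only if q = p. Consequently, the min-max value min_q V(q) equals −log 4 and is achieved exactly when the generator distribution matches the data distribution. -/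
open Finset

private lemma pointwise_le {a b t : ℝ} (ha : 0 < a) (hb : 0 < b) (h0 : 0 < t) (h1 : t < 1) :
    a * Real.log t + b * Real.log (1 - t) ≤
      a * Real.log (a / (a + b)) + b * Real.log (b / (a + b)) := by
  have hab : 0 < a + b := by linarith
  have h1t : 0 < 1 - t := by linarith
  have e1 : Real.log (t * (a + b) / a) = Real.log t - Real.log (a / (a + b)) := by
    rw [Real.log_div (by positivity) ha.ne', Real.log_div ha.ne' hab.ne',
      Real.log_mul h0.ne' hab.ne']; ring
  have e2 : Real.log ((1 - t) * (a + b) / b) = Real.log (1 - t) - Real.log (b / (a + b)) := by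
    rw [Real.log_div (by positivity) hb.ne', Real.log_div hb.ne' hab.ne',
      Real.log_mul h1t.ne' hab.ne']; ring
  have i1 : Real.log (t * (a + b) / a) ≤ t * (a + b) / a - 1 :=
    Real.log_le_sub_one_of_pos (by positivity)
  have i2 : Real.log ((1 - t) * (a + b) / b) ≤ (1 - t) * (a + b) / b - 1 :=
    Real.log_le_sub_one_of_pos (by positivity)
  rw [e1] at i1; rw [e2] at i2
  have key : a * (t * (a + b) / a - 1) + b * ((1 - t) * (a + b) / b - 1) = 0 := by
    field_simp; ring
  nlinarith [mul_le_mul_of_nonneg_left i1 ha.le, mul_le_mul_of_nonneg_left i2 hb.le]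

private lemma kl_facts {α : Type*} [Fintype α] (p m : α → ℝ) (hp : ∀ x, 0 < p x)
    (hm : ∀ x, 0 < m x) (hs : ∑ x, p x = ∑ x, m x) :
    0 ≤ ∑ x, p x * Real.log (p x / m x) ∧
      ((∑ x, p x * Real.log (p x / m x)) = 0 ↔ p = m) := by
  have hlog : ∀ x, Real.log (m x / p x) = - Real.log (p x / m x) := by
    intro x
    rw [Real.log_div (hm x).ne' (hp x).ne', Real.log_div (hp x).ne' (hm x).ne']; ring
  have hmp : ∀ x, p x * (m x / p x) = m x := by
    intro x
    have h1 : p x ≠ 0 := (hp x).ne'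
    field_simp
  have hterm : ∀ x, p x - m x ≤ p x * Real.log (p x / m x) := by
    intro x
    have h := Real.log_le_sub_one_of_pos (div_pos (hm x) (hp x))
    rw [hlog x] at h
    have h2 := mul_le_mul_of_nonneg_left h (hp x).le
    nlinarith [hmp x]
  have hsum : 0 ≤ ∑ x, p x * Real.log (p x / m x) := by
    calc (0:ℝ) = ∑ x, (p x - m x) := by rw [Finset.sum_sub_distrib, hs]; ring
    _ ≤ _ := Finset.sum_le_sum fun x _ => hterm x
  refine ⟨hsum, ?_, ?_⟩
  · intro h0
    funext x
    by_contra hne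
    have hstrict : p x - m x < p x * Real.log (p x / m x) := by
      have hne' : m x / p x ≠ 1 := by
        intro h; exact hne ((div_eq_one_iff_eq (hp x).ne').mp h).symm
      have h := Real.log_lt_sub_one_of_pos (div_pos (hm x) (hp x)) hne'
      rw [hlog x] at h
      have h2 := mul_lt_mul_of_pos_left h (hp x)
      nlinarith [hmp x]
    have hlt : (0:ℝ) < ∑ y, p y * Real.log (p y / m y) := by
      calc (0:ℝ) = ∑ y, (p y - m y) := by rw [Finset.sum_sub_distrib, hs]; ring
      _ < _ := Finset.sum_lt_sum (fun y _ => hterm y) ⟨x, Finset.mem_univ x, hstrict⟩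
    linarith
  · intro h
    subst h
    refine Finset.sum_eq_zero fun x _ => ?_
    rw [div_self (hp x).ne', Real.log_one, mul_zero]

private lemma main_aux {α : Type*} [Fintype α] [Nonempty α]
    (p : α → ℝ) (hp : ∀ x, 0 < p x) (hps : ∑ x, p x = 1)
    (q : α → ℝ) (hq : ∀ x, 0 < q x) (hqs : ∑ x, q x = 1) :
    -Real.log 4 ≤
        sSup {v : ℝ | ∃ d : α → ℝ, (∀ x, 0 < d x ∧ d x < 1) ∧
          v = ∑ x, p x * Real.log (d x) + ∑ x, q x * Real.log (1 - d x)} ∧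
      (sSup {v : ℝ | ∃ d : α → ℝ, (∀ x, 0 < d x ∧ d x < 1) ∧
          v = ∑ x, p x * Real.log (d x) + ∑ x, q x * Real.log (1 - d x)}
        = -Real.log 4 ↔ q = p) := by
  set F : ℝ := ∑ x, p x * Real.log (p x / (p x + q x)) +
      ∑ x, q x * Real.log (q x / (p x + q x)) with hF
  have hab : ∀ x, 0 < p x + q x := fun x => by have := hp x; have := hq x; linarith
  have hgreat : IsGreatest {v : ℝ | ∃ d : α → ℝ, (∀ x, 0 < d x ∧ d x < 1) ∧
      v = ∑ x, p x * Real.log (d x) + ∑ x, q x * Real.log (1 - d x)} F := by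
    constructor
    · refine ⟨fun x => p x / (p x + q x), fun x =>
        ⟨div_pos (hp x) (hab x), by rw [div_lt_one (hab x)]; linarith [hq x]⟩, ?_⟩
      have hrw : ∀ x : α, 1 - p x / (p x + q x) = q x / (p x + q x) := by
        intro x
        have h1 : p x + q x ≠ 0 := (hab x).ne'
        field_simp; ring
      simp only [hrw, hF]
    · rintro v ⟨d, hd, rfl⟩
      rw [hF, ← Finset.sum_add_distrib, ← Finset.sum_add_distrib]
      exact Finset.sum_le_sum fun x _ => pointwise_le (hp x) (hq x) (hd x).1 (hd x).2
  have hsup : sSup {v : ℝ | ∃ d : α → ℝ, (∀ x, 0 < d x ∧ d x < 1) ∧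
      v = ∑ x, p x * Real.log (d x) + ∑ x, q x * Real.log (1 - d x)} = F :=
    hgreat.csSup_eq
  set m : α → ℝ := fun x => (p x + q x) / 2 with hm
  have hmpos : ∀ x, 0 < m x := fun x => div_pos (hab x) two_pos
  have hmsum : ∑ x, m x = 1 := by
    simp only [hm]
    rw [← Finset.sum_div, Finset.sum_add_distrib, hps, hqs]; norm_num
  have hlog4 : Real.log 4 = 2 * Real.log 2 := by
    rw [show (4:ℝ) = 2 ^ 2 by norm_num, Real.log_pow]; push_cast; ring
  have hKLp : ∑ x, p x * Real.log (p x / m x) =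
      ∑ x, p x * Real.log (p x / (p x + q x)) + Real.log 2 := by
    have h : ∀ x, p x * Real.log (p x / m x) =
        p x * Real.log (p x / (p x + q x)) + p x * Real.log 2 := by
      intro x
      have h1 : p x + q x ≠ 0 := (hab x).ne'
      have h2 : p x / m x = p x / (p x + q x) * 2 := by
        simp only [hm]; field_simp
      rw [h2, Real.log_mul (div_pos (hp x) (hab x)).ne' (by norm_num)]; ring
    rw [Finset.sum_congr rfl fun x _ => h x, Finset.sum_add_distrib,
      ← Finset.sum_mul, hps, one_mul]
  have hKLq : ∑ x, q x * Real.log (q x / m x) =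
      ∑ x, q x * Real.log (q x / (p x + q x)) + Real.log 2 := by
    have h : ∀ x, q x * Real.log (q x / m x) =
        q x * Real.log (q x / (p x + q x)) + q x * Real.log 2 := by
      intro x
      have h1 : p x + q x ≠ 0 := (hab x).ne'
      have h2 : q x / m x = q x / (p x + q x) * 2 := by
        simp only [hm]; field_simp
      rw [h2, Real.log_mul (div_pos (hq x) (hab x)).ne' (by norm_num)]; ring
    rw [Finset.sum_congr rfl fun x _ => h x, Finset.sum_add_distrib,
      ← Finset.sum_mul, hqs, one_mul]
  have hFeq : F = (∑ x, p x * Real.log (p x / m x)) +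
      (∑ x, q x * Real.log (q x / m x)) - Real.log 4 := by
    rw [hKLp, hKLq, hlog4, hF]; ring
  obtain ⟨hKp0, hKpiff⟩ := kl_facts p m hp hmpos (by rw [hps, hmsum])
  obtain ⟨hKq0, hKqiff⟩ := kl_facts q m hq hmpos (by rw [hqs, hmsum])
  rw [hsup]
  refine ⟨by rw [hFeq]; linarith, ?_, ?_⟩
  · intro hFe
    rw [hFe] at hFeq
    have h1 : (∑ x, p x * Real.log (p x / m x)) = 0 := by linarith
    have h2 : (∑ x, q x * Real.log (q x / m x)) = 0 := by linarith
    rw [hKqiff.mp h2, ← hKpiff.mp h1]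
  · intro h
    have hpm : p = m := by funext x; simp only [hm, h]; ring
    have hqm : q = m := by funext x; simp only [hm, h]; ring
    rw [hFeq, hKpiff.mpr hpm, hKqiff.mpr hqm]; ring

/-- GAN min-max optimum (Proposition): for data distribution `p` on a finite
alphabet, the optimal discriminator value `V q` of any generator distribution `q`
is at least `-log 4`, with equality iff `q = p`; consequently the min-max value
`min_q V q` equals `-log 4` and is achieved exactly when `q = p`. -/
theorem gan_minmax_value {α : Type*} [Fintype α] [Nonempty α]
    (p : α → ℝ) (hp : ∀ x, 0 < p x) (hps : ∑ x, p x = 1) :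
    (∀ q : α → ℝ, (∀ x, 0 < q x) → ∑ x, q x = 1 →
      -Real.log 4 ≤
        sSup {v : ℝ | ∃ d : α → ℝ, (∀ x, 0 < d x ∧ d x < 1) ∧
          v = ∑ x, p x * Real.log (d x) + ∑ x, q x * Real.log (1 - d x)} ∧
      (sSup {v : ℝ | ∃ d : α → ℝ, (∀ x, 0 < d x ∧ d x < 1) ∧
          v = ∑ x, p x * Real.log (d x) + ∑ x, q x * Real.log (1 - d x)}
        = -Real.log 4 ↔ q = p)) ∧
    IsLeast
      {v : ℝ | ∃ q : α → ℝ, (∀ x, 0 < q x) ∧ (∑ x, q x = 1) ∧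
        v = sSup {w : ℝ | ∃ d : α → ℝ, (∀ x, 0 < d x ∧ d x < 1) ∧
          w = ∑ x, p x * Real.log (d x) + ∑ x, q x * Real.log (1 - d x)}}
      (-Real.log 4) := by
  refine ⟨fun q hq hqs => main_aux p hp hps q hq hqs, ?_, ?_⟩
  · exact ⟨p, hp, hps, ((main_aux p hp hps p hp hps).2.mpr rfl).symm⟩
  · rintro v ⟨q, hq, hqs, rfl⟩
    exact (main_aux p hp hps q hq hqs).1
end
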